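/- Let n ≥ 2 and let P ∈ ℝ^{n×n} be a permutation matrix (the matrix of any permutation of {1,…,n}). Then I − P is positive semi-definite in the sense that xᵀ(I − P)x ≥ 0 for all x ∈ ℝⁿ, and moreover for every real s ≥ cot(π/n) and every z ∈ ℂⁿ one has z† ( s(2I − P − Pᵀ) + i(Pᵀ − P) ) z ≥ 0; i.e. the asymmetry index of I − P is at most cot(π/n). -/

import Mathlib

/-!
Put `B = s • 1 - (s + i) • P`, so that `K_s(I - P) = B + Bᴴ` and `z† K_s(I - P) z = 2 Re z† B z`.
Split the index set into the cycles of the permutation; on a cycle of length `m ≤ n` the discrete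
Fourier transform on `ℤ/m` diagonalises `B`, so `m Re z† B z` is a nonnegative combination of the
numbers `Re (s - (s + i) ζ)` with `ζ^m = 1`. For `ζ = e^{2iφ}`, `0 ≤ φ ≤ π - π/m`, this number is
`2 sin φ (s sin φ + cos φ)`, and `s ≥ cot (π/n)` gives
`sin (π/n) (s sin φ + cos φ) ≥ sin (φ + π/n) ≥ 0`.
-/

open Matrix Complex ComplexOrder Finset ComplexConjugate

theorem Real.mul_sin_add_cos_nonneg {α φ s : ℝ} (hα₀ : 0 < α) (hαπ : α < Real.pi)
    (hs : Real.cot α ≤ s) (hφ : 0 ≤ φ) (hφα : φ + α ≤ Real.pi) :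
    0 ≤ s * Real.sin φ + Real.cos φ := by
  have hsinα : 0 < Real.sin α := Real.sin_pos_of_pos_of_lt_pi hα₀ hαπ
  have hcos : Real.cos α ≤ s * Real.sin α := by
    rwa [Real.cot_eq_cos_div_sin, div_le_iff₀ hsinα] at hs
  have hsinφ : 0 ≤ Real.sin φ := Real.sin_nonneg_of_nonneg_of_le_pi hφ (by linarith)
  have hsum : 0 ≤ Real.sin (φ + α) := Real.sin_nonneg_of_nonneg_of_le_pi (by linarith) hφα
  rw [Real.sin_add] at hsum
  refine nonneg_of_mul_nonneg_right ?_ hsinα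
  nlinarith [mul_le_mul_of_nonneg_right hcos hsinφ]

theorem Complex.re_add_neg_mul_nonneg_of_pow_eq_one {n m : ℕ} (hn : 2 ≤ n) (hm : 0 < m)
    (hmn : m ≤ n) {s : ℝ} (hs : Real.cot (Real.pi / n) ≤ s) {ζ : ℂ} (hζ : ζ ^ m = 1) :
    0 ≤ ((s : ℂ) + -(s + I) * ζ).re := by
  have : NeZero m := ⟨hm.ne'⟩
  obtain ⟨k, hk, rfl⟩ := (isPrimitiveRoot_exp m hm.ne').eq_pow_of_pow_eq_one hζ
  set φ : ℝ := Real.pi * k / m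
  have hpolar : exp (2 * Real.pi * I / m) ^ k = Real.cos (2 * φ) + Real.sin (2 * φ) * I := by
    have harg : (k : ℂ) * (2 * Real.pi * I / m) = ((2 * φ : ℝ) : ℂ) * I := by
      push_cast [φ]
      ring
    rw [← exp_nat_mul, harg, exp_mul_I, ← ofReal_cos, ← ofReal_sin]
  have hre : ((s : ℂ) + -(s + I) * exp (2 * Real.pi * I / m) ^ k).re =
      2 * Real.sin φ * (s * Real.sin φ + Real.cos φ) := by
    rw [hpolar]
    simp only [add_re, neg_re, mul_re, add_im, neg_im, mul_im, ofReal_re, ofReal_im, I_re, I_im,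
      Real.sin_two_mul, Real.cos_two_mul']
    linear_combination (-s) * Real.sin_sq_add_cos_sq φ
  have hπ := Real.pi_pos
  have hπn : Real.pi / n < Real.pi := div_lt_self hπ (by exact_mod_cast hn)
  have hπn₀ : 0 < Real.pi / n := by positivity
  have hφ : 0 ≤ φ := by positivity
  have hφα : φ + Real.pi / n ≤ Real.pi := by
    have hk' : (k : ℝ) + 1 ≤ m := by exact_mod_cast hk
    have hm₀ : (0 : ℝ) < m := by positivity
    have : Real.pi / n ≤ Real.pi / m := by gcongr
    calc φ + Real.pi / n ≤ Real.pi * k / m + Real.pi / m := by linarith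
      _ = Real.pi * (k + 1) / m := by ring
      _ ≤ Real.pi := by rw [div_le_iff₀ hm₀]; nlinarith
  rw [hre]
  exact mul_nonneg (mul_nonneg zero_le_two (Real.sin_nonneg_of_nonneg_of_le_pi hφ (by linarith)))
    (Real.mul_sin_add_cos_nonneg hπn₀ hπn hs hφ hφα)

namespace ZMod

variable {N : ℕ} [NeZero N]

theorem natCast_mul_sum_conj_mul_add (w : ZMod N → ℂ) (r : ZMod N) :
    (N : ℂ) * ∑ j, conj (w j) * w (j + r) =
      ∑ k, stdAddChar (r * k) * (conj (𝓕 w k) * 𝓕 w k) := by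
  have inversion (j : ZMod N) : (N : ℂ) * w j = ∑ k, stdAddChar (k * j) * 𝓕 w k := by
    have := congrFun (dft.symm_apply_apply w) j
    simp only [invDFT_apply, smul_eq_mul] at this
    rw [← this, ← mul_assoc, mul_inv_cancel₀ (NeZero.ne _), one_mul]
  have conj_dft (k : ZMod N) : conj (𝓕 w k) = ∑ j, stdAddChar (k * j) * conj (w j) := by
    simp only [dft_apply, map_sum, smul_eq_mul, map_mul, ← AddChar.map_neg_eq_conj, neg_neg,
      mul_comm k]
  calc (N : ℂ) * ∑ j, conj (w j) * w (j + r)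
      = ∑ j, conj (w j) * ∑ k, stdAddChar (k * (j + r)) * 𝓕 w k := by
        simp only [mul_sum, ← inversion]; congr 1; ext j; ring
    _ = ∑ k, stdAddChar (r * k) * (conj (𝓕 w k) * 𝓕 w k) := by
        simp only [conj_dft, mul_sum, sum_mul]
        rw [sum_comm]
        refine sum_congr rfl fun k _ => sum_congr rfl fun j _ => ?_
        rw [mul_add, AddChar.map_add_eq_mul, mul_comm k r]
        ring

theorem re_sum_conj_mul_add_shift_nonneg {a b : ℂ}
    (h : ∀ k : ZMod N, 0 ≤ (a + b * stdAddChar k).re) (w : ZMod N → ℂ) :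
    0 ≤ (∑ j, conj (w j) * (a * w j + b * w (j + 1))).re := by
  have spectral : (N : ℂ) * ∑ j, conj (w j) * (a * w j + b * w (j + 1)) =
      ∑ k, (a + b * stdAddChar k) * normSq (𝓕 w k) := by
    have h₀ := natCast_mul_sum_conj_mul_add w 0
    have h₁ := natCast_mul_sum_conj_mul_add w 1
    simp only [add_zero, zero_mul, AddChar.map_zero_eq_one, one_mul] at h₀ h₁
    simp only [mul_add, mul_left_comm _ a, mul_left_comm _ b, sum_add_distrib, ← mul_sum, h₀, h₁,
      normSq_eq_conj_mul_self, add_mul, mul_assoc]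
  have hN : (0 : ℝ) < N := by exact_mod_cast NeZero.pos N
  refine nonneg_of_mul_nonneg_right ?_ hN
  rw [← re_ofReal_mul, ofReal_natCast, spectral, re_sum]
  exact sum_nonneg fun k _ => by
    rw [re_mul_ofReal]
    exact mul_nonneg (h k) (normSq_nonneg _)

end ZMod

namespace MulAction

variable {G β : Type*} [Group G] [MulAction G β]

theorem zpow_cast_add_one_smul (g : G) (x : β) (k : ZMod (Function.minimalPeriod (g • ·) x)) :
    g ^ ((k + 1).cast : ℤ) • x = g • g ^ (k.cast : ℤ) • x := by
  have hmod : ((k + 1).cast : ℤ) % (Function.minimalPeriod (g • ·) x : ℤ) =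
      (1 + k.cast) % (Function.minimalPeriod (g • ·) x : ℤ) := by
    rw [← ZMod.intCast_eq_intCast_iff']
    push_cast [ZMod.intCast_zmod_cast]
    exact add_comm _ _
  rw [← zpow_smul_mod_minimalPeriod, hmod, zpow_smul_mod_minimalPeriod, _root_.zpow_one_add,
    mul_smul]

theorem sum_nonneg_of_sum_zpow_smul_nonneg [Fintype β] {M : Type*} [AddCommMonoid M]
    [PartialOrder M] [IsOrderedAddMonoid M] (g : G) {f : β → M}
    (h : ∀ x : β, 0 ≤ ∑ k : ZMod (Function.minimalPeriod (g • ·) x), f (g ^ (k.cast : ℤ) • x)) :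
    0 ≤ ∑ x, f x := by
  classical
  let orbitDecomposition : β ≃ Σ q : orbitRel.Quotient (Subgroup.zpowers g) β,
      ZMod (Function.minimalPeriod (g • ·) q.out) :=
    (selfEquivSigmaOrbits (Subgroup.zpowers g) β).trans
      (Equiv.sigmaCongrRight fun q => orbitZPowersEquiv g q.out)
  rw [← orbitDecomposition.symm.sum_comp, Fintype.sum_sigma]
  exact sum_nonneg fun q _ => h q.out

end MulAction

namespace Equiv.Perm

variable {α : Type*} [Fintype α]

theorem re_sum_conj_mul_add_apply_nonneg (e : Perm α) {a b : ℂ}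
    (h : ∀ m, 0 < m → m ≤ Fintype.card α → ∀ ζ : ℂ, ζ ^ m = 1 → 0 ≤ (a + b * ζ).re)
    (z : α → ℂ) :
    0 ≤ (∑ x, conj (z x) * (a * z x + b * z (e x))).re := by
  rw [re_sum]
  refine MulAction.sum_nonneg_of_sum_zpow_smul_nonneg e fun x => ?_
  have hm : Function.minimalPeriod (e • ·) x ≤ Fintype.card α := by
    classical
    rw [MulAction.minimalPeriod_eq_card]
    exact Fintype.card_subtype_le _
  set m := Function.minimalPeriod (e • ·) x
  have hshift (k : ZMod m) : e (e ^ (k.cast : ℤ) • x) = e ^ ((k + 1).cast : ℤ) • x :=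
    (MulAction.zpow_cast_add_one_smul e x k).symm
  simp only [hshift, ← re_sum]
  refine ZMod.re_sum_conj_mul_add_shift_nonneg (fun k => h m (NeZero.pos m) hm _ ?_) _
  rw [← AddChar.map_nsmul_eq_pow, nsmul_eq_mul, ZMod.natCast_self, zero_mul,
    AddChar.map_zero_eq_one]

theorem dotProduct_comp_le {R : Type*} [CommRing R] [LinearOrder R] [IsStrictOrderedRing R]
    (e : Perm α) (x : α → R) :
    x ⬝ᵥ (x ∘ e) ≤ x ⬝ᵥ x := by
  have amgm := sum_le_sum fun i (_ : i ∈ univ) => two_mul_le_add_sq (x i) (x (e i))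
  rw [sum_add_distrib, Equiv.sum_comp e (fun i => x i ^ 2)] at amgm
  simp only [dotProduct, Function.comp_apply, ← sq]
  simp only [mul_assoc, ← mul_sum] at amgm
  linarith

end Equiv.Perm

theorem Matrix.star_dotProduct_add_conjTranspose_mulVec {n : Type*} [Fintype n]
    (B : Matrix n n ℂ) (z : n → ℂ) :
    star z ⬝ᵥ (B + Bᴴ) *ᵥ z = 2 * (star z ⬝ᵥ B *ᵥ z).re := by
  rw [add_mulVec, dotProduct_add, mulVec_conjTranspose, star_dotProduct_star,
    ← dotProduct_mulVec, star_def, add_conj]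
  push_cast
  ring

theorem perm_matrix_asymmetry_index (n : ℕ) (hn : 2 ≤ n) (e : Equiv.Perm (Fin n)) :
    (∀ x : Fin n → ℝ,
      0 ≤ x ⬝ᵥ ((1 : Matrix (Fin n) (Fin n) ℝ) - e.permMatrix ℝ) *ᵥ x) ∧
    (∀ s : ℝ, Real.cot (Real.pi / n) ≤ s → ∀ z : Fin n → ℂ,
      0 ≤ star z ⬝ᵥ
        ((s : ℂ) • (((2 : ℝ) • (1 : Matrix (Fin n) (Fin n) ℝ) - e.permMatrix ℝ
            - (e.permMatrix ℝ)ᵀ).map Complex.ofReal)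
          + Complex.I • (((e.permMatrix ℝ)ᵀ - e.permMatrix ℝ).map Complex.ofReal)) *ᵥ z) := by
  refine ⟨fun x => ?_, fun s hs z => ?_⟩
  · rw [sub_mulVec, one_mulVec, permMatrix_mulVec, dotProduct_sub, sub_nonneg]
    exact e.dotProduct_comp_le x
  · set B : Matrix (Fin n) (Fin n) ℂ := (s : ℂ) • 1 + (-(s + I)) • e.permMatrix ℂ
    have hK : (s : ℂ) • (((2 : ℝ) • (1 : Matrix (Fin n) (Fin n) ℝ) - e.permMatrix ℝ
            - (e.permMatrix ℝ)ᵀ).map Complex.ofReal)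
          + Complex.I • (((e.permMatrix ℝ)ᵀ - e.permMatrix ℝ).map Complex.ofReal) = B + Bᴴ := by
      have hmap (M : Matrix (Fin n) (Fin n) ℝ) : M.map ofReal = ofRealHom.mapMatrix M := rfl
      have hperm (σ : Equiv.Perm (Fin n)) : ofRealHom.mapMatrix (σ.permMatrix ℝ) = σ.permMatrix ℂ :=
        PEquiv.map_toMatrix ofRealHom _
      simp only [B, hmap, two_smul, map_sub, map_add, map_one, transpose_permMatrix, hperm,
        conjTranspose_add, conjTranspose_smul, conjTranspose_one, conjTranspose_permMatrix,
        star_add, star_neg, star_def, conj_ofReal, conj_I]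
      module
    have hBz : star z ⬝ᵥ B *ᵥ z = ∑ i, conj (z i) * (s * z i + -(s + I) * z (e i)) := by
      simp only [B, add_mulVec, smul_mulVec, one_mulVec, permMatrix_mulVec, dotProduct]
      rfl
    rw [hK, star_dotProduct_add_conjTranspose_mulVec, hBz]
    have hBz_re := e.re_sum_conj_mul_add_apply_nonneg (fun m hm hmn ζ hζ =>
      re_add_neg_mul_nonneg_of_pow_eq_one hn hm (by simpa using hmn) hs hζ) z
    exact_mod_cast mul_nonneg zero_le_two hBz_re
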